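/- arXiv:1302.1020 — 2 statements merged into one kernel-verified Lean document; each statement's English description precedes it below -/
import Mathlib

section
/- (Divergence convergence implies entropy-rate convergence, statement (7).) Let P_Y be a binary target distribution and for each n let P̃_n be a probability distribution on {0,1}^n. If D(P̃_n ‖ P_Y^n)/n → 0 as n → ∞, then H(P̃_n)/n → H(P_Y) as n → ∞, where H denotes Shannon entropy in bits. -/
open Filter

/-- Binary entropy (in bits) of a binary distribution with `P_Y(1) = p`, `P_Y(0) = 1 - p`. -/
noncomputable def binEnt (p : ℝ) : ℝ :=
  -(p * Real.logb 2 p) - (1 - p) * Real.logb 2 (1 - p)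

/-- The `n`-fold product distribution `P_Y^n` on `{0,1}^n`, where `P_Y(1) = p`. -/
noncomputable def prodP (p : ℝ) {n : ℕ} (y : Fin n → Bool) : ℝ :=
  ∏ i, (if y i then p else 1 - p)

noncomputable def kk {n : ℕ} (y : Fin n → Bool) : ℝ := ∑ i, if y i then (1:ℝ) else 0

lemma kk_nonneg {n : ℕ} (y : Fin n → Bool) : 0 ≤ kk y := by
  unfold kk
  apply Finset.sum_nonneg
  intro i _
  by_cases h : y i <;> simp [h]

lemma kk_le {n : ℕ} (y : Fin n → Bool) : kk y ≤ n := by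
  unfold kk
  calc (∑ i, if y i then (1:ℝ) else 0) ≤ ∑ _i : Fin n, (1:ℝ) := by
        apply Finset.sum_le_sum
        intro i _
        by_cases h : y i <;> simp [h]
    _ = n := by simp

lemma sum_prodP (q : ℝ) (n : ℕ) : ∑ y : Fin n → Bool, prodP q y = 1 := by
  unfold prodP
  rw [← Fintype.piFinset_univ,
    ← Finset.prod_univ_sum (t := fun _ : Fin n => (Finset.univ : Finset Bool))
      (f := fun _ b => if b then q else 1 - q)]
  simp

lemma prodP_pos {q : ℝ} (hq0 : 0 < q) (hq1 : q < 1) {n : ℕ} (y : Fin n → Bool) :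
    0 < prodP q y := by
  unfold prodP
  apply Finset.prod_pos
  intro i _
  by_cases h : y i <;> simp [h] <;> linarith

lemma logb_prodP {q : ℝ} (hq0 : 0 < q) (hq1 : q < 1) {n : ℕ} (y : Fin n → Bool) :
    Real.logb 2 (prodP q y) = kk y * Real.logb 2 q + ((n:ℝ) - kk y) * Real.logb 2 (1-q) := by
  unfold prodP kk
  rw [Real.logb_prod]
  · have h1 : ∀ i ∈ Finset.univ, Real.logb 2 (if y i then q else 1-q)
        = (if y i then (1:ℝ) else 0) * Real.logb 2 q + ((1:ℝ) - (if y i then (1:ℝ) else 0)) * Real.logb 2 (1-q) := by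
      intro i _; by_cases h : y i <;> simp [h]
    rw [Finset.sum_congr rfl h1, Finset.sum_add_distrib, ← Finset.sum_mul, ← Finset.sum_mul,
      Finset.sum_sub_distrib]
    simp [mul_comm]
  · intro i _
    by_cases h : y i <;> simp [h] <;> intro hh <;> linarith

/-- cross-term formula -/
lemma sum_mul_logb_prodP {q : ℝ} (hq0 : 0 < q) (hq1 : q < 1) {n : ℕ}
    (P : (Fin n → Bool) → ℝ) (hP1 : ∑ y : Fin n → Bool, P y = 1) :
    ∑ y : Fin n → Bool, P y * Real.logb 2 (prodP q y)
      = (∑ y : Fin n → Bool, P y * kk y) * Real.logb 2 q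
        + ((n:ℝ) - ∑ y : Fin n → Bool, P y * kk y) * Real.logb 2 (1-q) := by
  have h1 : ∀ y ∈ (Finset.univ : Finset (Fin n → Bool)),
      P y * Real.logb 2 (prodP q y)
      = (P y * kk y) * Real.logb 2 q + (P y * n) * Real.logb 2 (1-q)
        - (P y * kk y) * Real.logb 2 (1-q) := by
    intro y _; rw [logb_prodP hq0 hq1]; ring
  rw [Finset.sum_congr rfl h1, Finset.sum_sub_distrib, Finset.sum_add_distrib,
    ← Finset.sum_mul, ← Finset.sum_mul, ← Finset.sum_mul, ← Finset.sum_mul, hP1]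
  ring

/-- Gibbs inequality against a product distribution. -/
lemma gibbs {q : ℝ} (hq0 : 0 < q) (hq1 : q < 1) {n : ℕ}
    (P : (Fin n → Bool) → ℝ) (hP0 : ∀ y, 0 ≤ P y) (hP1 : ∑ y : Fin n → Bool, P y = 1) :
    ∑ y : Fin n → Bool, P y * Real.logb 2 (prodP q y)
      ≤ ∑ y : Fin n → Bool, P y * Real.logb 2 (P y) := by
  have hlog2 : (0:ℝ) < Real.log 2 := Real.log_pos (by norm_num)
  have key : ∀ y ∈ (Finset.univ : Finset (Fin n → Bool)),
      P y * Real.logb 2 (prodP q y) - P y * Real.logb 2 (P y)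
        ≤ (prodP q y - P y) / Real.log 2 := by
    intro y _
    have hR : 0 < prodP q y := prodP_pos hq0 hq1 y
    rcases eq_or_lt_of_le (hP0 y) with h | h
    · simp [← h]
      positivity
    · have h1 : Real.log (prodP q y / P y) ≤ prodP q y / P y - 1 :=
        Real.log_le_sub_one_of_pos (by positivity)
      have h2 : P y * Real.log (prodP q y / P y) ≤ prodP q y - P y := by
        have := mul_le_mul_of_nonneg_left h1 (le_of_lt h)
        calc P y * Real.log (prodP q y / P y) ≤ P y * (prodP q y / P y - 1) := this
          _ = prodP q y - P y := by field_simp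
      have h3 : Real.log (prodP q y / P y) = Real.log (prodP q y) - Real.log (P y) :=
        Real.log_div (ne_of_gt hR) (ne_of_gt h)
      rw [Real.logb, Real.logb]
      rw [h3] at h2
      have e : P y * (Real.log (prodP q y) / Real.log 2) - P y * (Real.log (P y) / Real.log 2)
          = (P y * (Real.log (prodP q y) - Real.log (P y))) / Real.log 2 := by ring
      rw [e]
      exact (div_le_div_iff_of_pos_right hlog2).mpr h2
  have hsum := Finset.sum_le_sum key
  rw [Finset.sum_sub_distrib, ← Finset.sum_div, Finset.sum_sub_distrib,
    sum_prodP, hP1] at hsum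
  simp at hsum
  linarith

/-- divergence decomposition -/
lemma div_decomp {q : ℝ} (hq0 : 0 < q) (hq1 : q < 1) {n : ℕ}
    (P : (Fin n → Bool) → ℝ) (hP0 : ∀ y, 0 ≤ P y) :
    ∑ y : Fin n → Bool, P y * Real.logb 2 (P y / prodP q y)
      = ∑ y : Fin n → Bool, P y * Real.logb 2 (P y)
        - ∑ y : Fin n → Bool, P y * Real.logb 2 (prodP q y) := by
  rw [← Finset.sum_sub_distrib]
  apply Finset.sum_congr rfl
  intro y _
  rcases eq_or_lt_of_le (hP0 y) with h | h
  · simp [← h]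
  · rw [Real.logb_div (ne_of_gt h) (ne_of_gt (prodP_pos hq0 hq1 y))]
    ring

/-- positivity of binary relative entropy -/
lemma binKL_pos {p q : ℝ} (hp0 : 0 < p) (hp1 : p < 1) (hq0 : 0 < q) (hq1 : q < 1)
    (hne : q ≠ p) :
    0 < q * (Real.logb 2 q - Real.logb 2 p)
      + (1-q) * (Real.logb 2 (1-q) - Real.logb 2 (1-p)) := by
  have hlog2 : (0:ℝ) < Real.log 2 := Real.log_pos (by norm_num)
  have e1 : Real.logb 2 q - Real.logb 2 p = (Real.log q - Real.log p) / Real.log 2 := by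
    rw [Real.logb, Real.logb]; ring
  have e2 : Real.logb 2 (1-q) - Real.logb 2 (1-p)
      = (Real.log (1-q) - Real.log (1-p)) / Real.log 2 := by
    rw [Real.logb, Real.logb]; ring
  rw [e1, e2]
  have key : 0 < q * (Real.log q - Real.log p) + (1-q) * (Real.log (1-q) - Real.log (1-p)) := by
    have h1 : Real.log (p / q) < p / q - 1 := by
      apply Real.log_lt_sub_one_of_pos (by positivity)
      intro hc
      rw [div_eq_one_iff_eq (ne_of_gt hq0)] at hc
      exact hne hc.symm
    have h1' : Real.log p - Real.log q < p / q - 1 := by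
      rwa [Real.log_div (ne_of_gt hp0) (ne_of_gt hq0)] at h1
    have h2 : Real.log ((1-p) / (1-q)) ≤ (1-p) / (1-q) - 1 :=
      Real.log_le_sub_one_of_pos (by apply div_pos <;> linarith)
    have h2' : Real.log (1-p) - Real.log (1-q) ≤ (1-p) / (1-q) - 1 := by
      rwa [Real.log_div (by linarith) (by linarith)] at h2
    have k1 : q * (Real.log q - Real.log p) > q - p := by
      have := mul_lt_mul_of_pos_left h1' hq0
      have e : q * (p / q - 1) = p - q := by field_simp
      nlinarith
    have k2 : (1-q) * (Real.log (1-q) - Real.log (1-p)) ≥ p - q := by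
      have := mul_le_mul_of_nonneg_left h2' (by linarith : (0:ℝ) ≤ 1 - q)
      have hq1' : (1:ℝ) - q ≠ 0 := by linarith
      have e : (1-q) * ((1-p) / (1-q) - 1) = q - p := by field_simp; ring
      nlinarith
    linarith
  have : q * ((Real.log q - Real.log p) / Real.log 2)
      + (1-q) * ((Real.log (1-q) - Real.log (1-p)) / Real.log 2)
      = (q * (Real.log q - Real.log p) + (1-q) * (Real.log (1-q) - Real.log (1-p))) / Real.log 2 := by
    ring
  rw [this]
  positivity

lemma lin_aux {S n q A B Dn : ℝ} (hL : S * A + (n - S) * B ≤ Dn)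
    (h : 0 ≤ (S - n * q) * (A - B)) : n * (q * A + (1 - q) * B) ≤ Dn := by nlinarith

set_option maxHeartbeats 1000000 in
/-- **Divergence convergence implies entropy-rate convergence (statement (7)).**
Let `P_Y` be a binary target distribution (`P_Y(1) = p`, `0 < p < 1`) and for
each `n` let `P̃_n` be a probability distribution on `{0,1}^n`.  If
`D(P̃_n ‖ P_Y^n)/n → 0` as `n → ∞`, then `H(P̃_n)/n → H(P_Y)` as `n → ∞`,
where `H` denotes Shannon entropy in bits. -/
theorem divergence_to_entropy_rate (p : ℝ) (hp0 : 0 < p) (hp1 : p < 1)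
    (P : ∀ n : ℕ, (Fin n → Bool) → ℝ)
    (hP0 : ∀ n y, 0 ≤ P n y)
    (hP1 : ∀ n, ∑ y : Fin n → Bool, P n y = 1)
    (hdiv : Tendsto (fun n =>
        (∑ y : Fin n → Bool, P n y * Real.logb 2 (P n y / prodP p y)) / n)
      atTop (nhds 0)) :
    Tendsto (fun n =>
        (-∑ y : Fin n → Bool, P n y * Real.logb 2 (P n y)) / n)
      atTop (nhds (binEnt p)) := by
  classical
  set lp := Real.logb 2 p with hlp
  set l1p := Real.logb 2 (1-p) with hl1p
  set S : ℕ → ℝ := fun n => ∑ y : Fin n → Bool, P n y * kk y with hSdef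
  set D : ℕ → ℝ := fun n => ∑ y : Fin n → Bool, P n y * Real.logb 2 (P n y / prodP p y)
    with hDdef
  set Hc : ℕ → ℝ := fun n => ∑ y : Fin n → Bool, P n y * Real.logb 2 (P n y) with hHcdef
  have hdiv' : Tendsto (fun n => D n / (n:ℝ)) atTop (nhds 0) := hdiv
  have hS0 : ∀ n, 0 ≤ S n := fun n =>
    Finset.sum_nonneg (fun y _ => mul_nonneg (hP0 n y) (kk_nonneg y))
  have hSn : ∀ n, S n ≤ n := by
    intro n
    calc S n ≤ ∑ y : Fin n → Bool, P n y * n :=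
          Finset.sum_le_sum (fun y _ => mul_le_mul_of_nonneg_left (kk_le y) (hP0 n y))
      _ = (n:ℝ) := by rw [← Finset.sum_mul, hP1 n]; ring
  have ident : ∀ n, D n = Hc n - (S n * lp + ((n:ℝ) - S n) * l1p) := by
    intro n
    rw [hDdef]
    simp only
    rw [div_decomp hp0 hp1 (P n) (hP0 n), sum_mul_logb_prodP hp0 hp1 (P n) (hP1 n)]
  have lower : ∀ q, 0 < q → q < 1 → ∀ n,
      S n * (Real.logb 2 q - lp) + ((n:ℝ) - S n) * (Real.logb 2 (1-q) - l1p) ≤ D n := by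
    intro q hq0 hq1 n
    have g := gibbs hq0 hq1 (P n) (hP0 n) (hP1 n)
    rw [sum_mul_logb_prodP hq0 hq1 (P n) (hP1 n)] at g
    have hid := ident n
    nlinarith [g, hid]
  -- convergence of the mean fraction of ones
  have hα : Tendsto (fun n => S n / (n:ℝ)) atTop (nhds p) := by
    rw [Metric.tendsto_atTop]
    intro ε hε
    have hminpos : 0 < min ε (min p (1-p)) := lt_min hε (lt_min hp0 (by linarith))
    set ε' := min ε (min p (1-p)) / 2 with hε'def
    have hε'0 : 0 < ε' := by positivity
    have hε'ε : ε' < ε := by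
      have := min_le_left ε (min p (1-p)); rw [hε'def]; linarith
    have hε'p : ε' < p := by
      have h1 := min_le_right ε (min p (1-p))
      have h2 := min_le_left p (1-p)
      rw [hε'def]; linarith
    have hε'1p : ε' < 1 - p := by
      have h1 := min_le_right ε (min p (1-p))
      have h2 := min_le_right p (1-p)
      rw [hε'def]; linarith
    have hqpl0 : 0 < p + ε' := by linarith
    have hqpl1 : p + ε' < 1 := by linarith
    have hqmi0 : 0 < p - ε' := by linarith
    have hqmi1 : p - ε' < 1 := by linarith
    set Apl := Real.logb 2 (p+ε') - lp with hApl
    set Bpl := Real.logb 2 (1-(p+ε')) - l1p with hBpl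
    set Ami := Real.logb 2 (p-ε') - lp with hAmi
    set Bmi := Real.logb 2 (1-(p-ε')) - l1p with hBmi
    have hAplpos : 0 < Apl := by
      rw [hApl, hlp]; have := Real.logb_lt_logb (by norm_num : (1:ℝ) < 2) hp0 (by linarith : p < p + ε'); linarith
    have hBplneg : Bpl < 0 := by
      rw [hBpl, hl1p]
      have := Real.logb_lt_logb (by norm_num : (1:ℝ) < 2) (by linarith : (0:ℝ) < 1 - (p+ε'))
        (by linarith : 1 - (p+ε') < 1 - p)
      linarith
    have hAmineg : Ami < 0 := by
      rw [hAmi, hlp]; have := Real.logb_lt_logb (by norm_num : (1:ℝ) < 2) hqmi0 (by linarith : p - ε' < p); linarith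
    have hBmipos : 0 < Bmi := by
      rw [hBmi, hl1p]
      have := Real.logb_lt_logb (by norm_num : (1:ℝ) < 2) (by linarith : (0:ℝ) < 1 - p)
        (by linarith : 1 - p < 1 - (p - ε'))
      linarith
    have hmpl : 0 < (p+ε') * Apl + (1-(p+ε')) * Bpl :=
      binKL_pos hp0 hp1 hqpl0 hqpl1 (by linarith)
    have hmmi : 0 < (p-ε') * Ami + (1-(p-ε')) * Bmi :=
      binKL_pos hp0 hp1 hqmi0 hqmi1 (by linarith)
    set m := min ((p+ε') * Apl + (1-(p+ε')) * Bpl) ((p-ε') * Ami + (1-(p-ε')) * Bmi) with hm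
    have hmpos : 0 < m := lt_min hmpl hmmi
    obtain ⟨N, hN⟩ := (Metric.tendsto_atTop.mp hdiv') m hmpos
    refine ⟨max N 1, fun n hn => ?_⟩
    have hnN : n ≥ N := le_trans (le_max_left _ _) hn
    have hn1 : 1 ≤ n := le_trans (le_max_right _ _) hn
    have hn0 : (0:ℝ) < n := by exact_mod_cast Nat.lt_of_lt_of_le Nat.zero_lt_one hn1
    have hdist := hN n hnN
    rw [Real.dist_eq, sub_zero] at hdist
    have habs := abs_lt.mp hdist
    rw [Real.dist_eq]
    rw [abs_lt]
    constructor
    · -- lower side: S n / n > p - ε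
      by_contra hc
      push_neg at hc
      have hc' : S n / (n:ℝ) ≤ p - ε := by linarith
      rw [div_le_iff₀ hn0] at hc'
      have hne : 0 < (n:ℝ) * (ε - ε') := mul_pos hn0 (by linarith)
      have hSlt' : S n ≤ (n:ℝ) * (p - ε') := by nlinarith
      have hL := lower (p-ε') hqmi0 hqmi1 n
      have hint : 0 ≤ (S n - (n:ℝ) * (p-ε')) * (Ami - Bmi) := by
        have hh := mul_nonneg (by linarith : (0:ℝ) ≤ (n:ℝ)*(p-ε') - S n)
          (by linarith : (0:ℝ) ≤ Bmi - Ami)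
        nlinarith [hh]
      have key := lin_aux hL hint
      have hmin := min_le_right ((p+ε') * Apl + (1-(p+ε')) * Bpl)
        ((p-ε') * Ami + (1-(p-ε')) * Bmi)
      have hmn := mul_le_mul_of_nonneg_right hmin hn0.le
      rw [hApl, hBpl, hAmi, hBmi] at hmn
      have : m ≤ D n / n := by
        rw [le_div_iff₀ hn0, hm, hApl, hBpl, hAmi, hBmi]
        linarith [hmn, key]
      linarith [habs.2]
    · -- upper side: S n / n < p + ε
      by_contra hc
      push_neg at hc
      have hc' : p + ε ≤ S n / (n:ℝ) := by linarith
      rw [le_div_iff₀ hn0] at hc'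
      have hne : 0 < (n:ℝ) * (ε - ε') := mul_pos hn0 (by linarith)
      have hSgt' : (n:ℝ) * (p + ε') ≤ S n := by nlinarith
      have hL := lower (p+ε') hqpl0 hqpl1 n
      have hint : 0 ≤ (S n - (n:ℝ) * (p+ε')) * (Apl - Bpl) :=
        mul_nonneg (by linarith) (by linarith)
      have key := lin_aux hL hint
      have hmin := min_le_left ((p+ε') * Apl + (1-(p+ε')) * Bpl)
        ((p-ε') * Ami + (1-(p-ε')) * Bmi)
      have hmn := mul_le_mul_of_nonneg_right hmin hn0.le
      rw [hApl, hBpl, hAmi, hBmi] at hmn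
      have : m ≤ D n / n := by
        rw [le_div_iff₀ hn0, hm, hApl, hBpl, hAmi, hBmi]
        linarith [hmn, key]
      linarith [habs.2]
  -- final assembly
  show Tendsto (fun n => (-Hc n) / (n:ℝ)) atTop (nhds (binEnt p))
  have h1 : Tendsto (fun n => -(D n) / (n:ℝ)) atTop (nhds 0) := by
    have := hdiv'.neg
    simp only [neg_div] at *
    simpa using this
  have h2 : Tendsto (fun n => (S n / (n:ℝ)) * lp + (1 - S n / (n:ℝ)) * l1p) atTop
      (nhds (p * lp + (1-p) * l1p)) :=
    (hα.mul_const lp).add ((tendsto_const_nhds.sub hα).mul_const l1p)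
  have h3 := h1.sub h2
  have e : binEnt p = 0 - (p * lp + (1-p) * l1p) := by
    rw [binEnt, hlp, hl1p]; ring
  rw [e]
  apply h3.congr'
  filter_upwards [eventually_ge_atTop 1] with n hn
  have hn0 : (0:ℝ) < n := by exact_mod_cast Nat.lt_of_lt_of_le Nat.zero_lt_one hn
  have hid : -Hc n = -(D n) - (S n * lp + ((n:ℝ) - S n) * l1p) := by
    have := ident n; linarith
  rw [hid]
  field_simp
end

section
/- (Underflow part of Proposition 3; equality (24).) Let P_Y be a binary target distribution, let D be a finite prefix-free set of nonempty binary strings each of length at most n, and let w : D → (0,∞) be weights. For v ∈ {0,1}^n having a (necessarily unique) prefix c_v ∈ D, set P(v) = w(c_v) · Π_{i=ℓ(c_v)+1}^{n} P_Y(v_i), and set P(v) = 0 if no element of D is a prefix of v. Then Σ_{v ∈ {0,1}^n : P(v) > 0} P(v) log₂(P(v)/P_Y^n(v)) = Σ_{c ∈ D} w(c) log₂(w(c)/P_Y^{ℓ(c)}(c)). -/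
/-- The probability `P_Y^{ℓ(L)}(L) = Π_i P_Y(L_i)` of a binary string `L`,
where `P_Y(1) = p`, `P_Y(0) = 1 - p`. -/
noncomputable def pstr (p : ℝ) (L : List Bool) : ℝ :=
  (L.map fun b => if b then p else 1 - p).prod

/-- The (sub)distribution on `{0,1}^n` of the underflow part: for `v` having a
(necessarily unique) prefix `c_v ∈ D`, `P(v) = w(c_v) · Π_{i=ℓ(c_v)+1}^n P_Y(v_i)`,
and `P(v) = 0` if no element of `D` is a prefix of `v`.  (By prefix-freeness at
most one summand is nonzero.) -/
noncomputable def underP (p : ℝ) (n : ℕ) (D : Finset (List Bool))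
    (w : List Bool → ℝ) (v : Fin n → Bool) : ℝ :=
  ∑ c ∈ D, (if c <+: List.ofFn v then w c * pstr p ((List.ofFn v).drop c.length) else 0)

lemma pstr_nil (p : ℝ) : pstr p [] = 1 := rfl

lemma pstr_cons (p : ℝ) (b : Bool) (L : List Bool) :
    pstr p (b :: L) = (if b then p else 1 - p) * pstr p L := rfl

lemma pstr_pos {p : ℝ} (hp0 : 0 < p) (hp1 : p < 1) (L : List Bool) : 0 < pstr p L := by
  induction L with
  | nil => norm_num [pstr_nil]
  | cons b L ih =>
      rw [pstr_cons]
      have h : 0 < (if b then p else 1 - p) := by split <;> linarith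
      exact mul_pos h ih

lemma pstr_append (p : ℝ) (a b : List Bool) : pstr p (a ++ b) = pstr p a * pstr p b := by
  simp [pstr]

lemma sum_suffix {p : ℝ} (hp0 : 0 < p) (hp1 : p < 1) :
    ∀ (n : ℕ) (c : List Bool), c.length ≤ n →
      ∑ v : Fin n → Bool,
        (if c <+: List.ofFn v then pstr p ((List.ofFn v).drop c.length) else 0) = 1 := by
  intro n
  induction n with
  | zero =>
      intro c hc
      have hnil : c = [] := List.eq_nil_of_length_eq_zero (Nat.le_zero.mp hc)
      subst hnil
      simp [pstr_nil]
  | succ n ih =>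
      intro c hc
      rw [← Equiv.sum_comp (Fin.consEquiv fun _ : Fin (n+1) => Bool)]
      rw [Fintype.sum_prod_type]
      have hofn : ∀ (b : Bool) (u : Fin n → Bool),
          List.ofFn ((Fin.consEquiv fun _ : Fin (n+1) => Bool) (b, u)) = b :: List.ofFn u := by
        intro b u
        show List.ofFn (Fin.cons b u : Fin (n+1) → Bool) = _
        rw [List.ofFn_succ]
        simp
      cases c with
      | nil =>
          simp only [hofn, List.nil_prefix, if_true, List.length_nil, List.drop_zero,
            pstr_cons]
          have h0 := ih [] (Nat.zero_le n)
          simp only [List.nil_prefix, if_true, List.length_nil, List.drop_zero] at h0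
          rw [Fintype.sum_bool]
          simp only [← Finset.mul_sum, h0]
          norm_num
      | cons b₀ c' =>
          have hc' : c'.length ≤ n := Nat.succ_le_succ_iff.mp hc
          simp only [hofn, List.cons_prefix_cons, List.length_cons, List.drop_succ_cons]
          have key : ∀ b : Bool,
              (∑ u : Fin n → Bool, (if b₀ = b ∧ c' <+: List.ofFn u then
                pstr p ((List.ofFn u).drop c'.length) else 0)) = if b₀ = b then 1 else 0 := by
            intro b
            by_cases hb : b₀ = b
            · simp only [hb, true_and, if_true]
              exact ih c' hc'
            · simp [hb]
          rw [Fintype.sum_bool, key true, key false]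
          cases b₀ <;> simp

open Classical in
/-- **Underflow part of Proposition 3; equality (24).** Let `P_Y` be a binary
target distribution (`P_Y(1) = p`, `0 < p < 1`), let `D` be a finite prefix-free
set of nonempty binary strings each of length at most `n`, and let
`w : D → (0,∞)` be weights.  With `P` as above,
`Σ_{v ∈ {0,1}^n : P(v) > 0} P(v) log₂(P(v)/P_Y^n(v))
  = Σ_{c ∈ D} w(c) log₂(w(c)/P_Y^{ℓ(c)}(c))`. -/
theorem underflow_divergence_eq (p : ℝ) (hp0 : 0 < p) (hp1 : p < 1) (n : ℕ)
    (D : Finset (List Bool))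
    (hpf : ∀ c ∈ D, ∀ d ∈ D, c <+: d → c = d)
    (hne : ∀ c ∈ D, c ≠ [])
    (hlen : ∀ c ∈ D, c.length ≤ n)
    (w : List Bool → ℝ) (hw : ∀ c ∈ D, 0 < w c) :
    ∑ v ∈ Finset.univ.filter (fun v : Fin n → Bool => 0 < underP p n D w v),
        underP p n D w v *
          Real.logb 2 (underP p n D w v / pstr p (List.ofFn v)) =
      ∑ c ∈ D, w c * Real.logb 2 (w c / pstr p c) := by
  have hps : ∀ L, 0 < pstr p L := pstr_pos hp0 hp1
  have hstep : ∀ v : Fin n → Bool,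
      (if 0 < underP p n D w v then
        underP p n D w v * Real.logb 2 (underP p n D w v / pstr p (List.ofFn v)) else 0)
      = ∑ c ∈ D, (if c <+: List.ofFn v then
          (w c * pstr p ((List.ofFn v).drop c.length)) * Real.logb 2 (w c / pstr p c)
          else 0) := by
    intro v
    by_cases hex : ∃ c ∈ D, c <+: List.ofFn v
    · obtain ⟨c₀, hc₀D, hc₀⟩ := hex
      have huniq : ∀ c ∈ D, c <+: List.ofFn v → c = c₀ := by
        intro c hcD hcpre
        rcases List.prefix_or_prefix_of_prefix hcpre hc₀ with h | h
        · exact hpf c hcD c₀ hc₀D h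
        · exact (hpf c₀ hc₀D c hcD h).symm
      have hU : underP p n D w v = w c₀ * pstr p ((List.ofFn v).drop c₀.length) := by
        rw [underP, Finset.sum_eq_single c₀]
        · rw [if_pos hc₀]
        · intro c hcD hne'
          by_cases h : c <+: List.ofFn v
          · exact absurd (huniq c hcD h) hne'
          · rw [if_neg h]
        · intro h; exact absurd hc₀D h
      have hpos : 0 < underP p n D w v := hU ▸ mul_pos (hw c₀ hc₀D) (hps _)
      have hR : (∑ c ∈ D, (if c <+: List.ofFn v then
          (w c * pstr p ((List.ofFn v).drop c.length)) * Real.logb 2 (w c / pstr p c)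
          else 0))
          = (w c₀ * pstr p ((List.ofFn v).drop c₀.length)) *
              Real.logb 2 (w c₀ / pstr p c₀) := by
        rw [Finset.sum_eq_single c₀]
        · rw [if_pos hc₀]
        · intro c hcD hne'
          by_cases h : c <+: List.ofFn v
          · exact absurd (huniq c hcD h) hne'
          · rw [if_neg h]
        · intro h; exact absurd hc₀D h
      rw [if_pos hpos, hR, hU]
      congr 1
      set d := (List.ofFn v).drop c₀.length with hd
      have heq : c₀ ++ d = List.ofFn v := List.prefix_iff_eq_append.mp hc₀
      rw [← heq, pstr_append]
      congr 1
      rw [mul_div_mul_right _ _ (hps d).ne']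
    · push_neg at hex
      have hU : underP p n D w v = 0 :=
        Finset.sum_eq_zero fun c hc => if_neg (hex c hc)
      rw [hU, if_neg (lt_irrefl 0), eq_comm]
      exact Finset.sum_eq_zero fun c hc => if_neg (hex c hc)
  rw [Finset.sum_filter]
  rw [Finset.sum_congr rfl fun v _ => hstep v]
  rw [Finset.sum_comm]
  apply Finset.sum_congr rfl
  intro c hc
  have hss := sum_suffix hp0 hp1 n c (hlen c hc)
  calc ∑ v : Fin n → Bool, (if c <+: List.ofFn v then
          (w c * pstr p ((List.ofFn v).drop c.length)) * Real.logb 2 (w c / pstr p c)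
          else 0)
      = (w c * Real.logb 2 (w c / pstr p c)) *
          ∑ v : Fin n → Bool, (if c <+: List.ofFn v then
            pstr p ((List.ofFn v).drop c.length) else 0) := by
        rw [Finset.mul_sum]
        apply Finset.sum_congr rfl
        intro v _
        split <;> ring
    _ = w c * Real.logb 2 (w c / pstr p c) := by rw [hss, mul_one]
end
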